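/- arXiv:2004.02598 — 2 statements merged into one kernel-verified Lean document; each statement's English description precedes it below -/
import Mathlib

section
/- Let n ≥ 2 and suppose B, C ∈ M_n(ℚ) are invertible matrices that both represent the same bounded monomial polyhedron 𝒰 (i.e., 𝒰 = {z : ∏_k |z_k|^{b^j_k} defined and < 1 for all j} = {z : ∏_k |z_k|^{c^j_k} defined and < 1 for all j}). Then max_{1≤k≤n} h(B^{-1}e_k) = max_{1≤k≤n} h(C^{-1}e_k); in other words, the complexity κ(𝒰) depends only on the domain 𝒰 and not on the representing matrix. -/
open MeasureTheory Complex
open scoped ENNReal NNReal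

noncomputable section

/-- The monomial polyhedron associated to a rational matrix `B`: the set of `z` in `ℂⁿ` such
that for each row `j`, the monomial `∏ k, |z k| ^ (B j k)` is defined (no zero raised to a
negative power) and is `< 1`. -/
def monomialPolyhedron {n : ℕ} (B : Matrix (Fin n) (Fin n) ℚ) : Set (Fin n → ℂ) :=
  {z | ∀ j : Fin n, (∀ k, B j k < 0 → z k ≠ 0) ∧
    ∏ k, ‖z k‖ ^ (B j k : ℝ) < 1}

/-- The projective height of a rational vector `x`: writing `y ∈ ℤⁿ` for the integer vector
proportional to `x` with `gcd = 1`, this is `∑ |y j|`. (Here `x` is first scaled by the product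
of the denominators to an integer vector, which is then divided by its gcd.) -/
def projHeight {n : ℕ} (x : Fin n → ℚ) : ℕ :=
  (∑ k, (x k * ∏ j, ((x j).den : ℚ)).num.natAbs) /
    Finset.univ.gcd fun k => (x k * ∏ j, ((x j).den : ℚ)).num.natAbs

/-- The complexity of a monomial polyhedron represented by an invertible matrix `B`:
the maximum projective height of the columns of `B⁻¹`. -/
def matrixComplexity {n : ℕ} (B : Matrix (Fin n) (Fin n) ℚ) : ℕ :=
  Finset.univ.sup fun k => projHeight fun j => B⁻¹ j k

/-! Evaluating at the points `z = exp x`, `x ∈ ℚⁿ`, shows that `𝒰_B` determines the open cone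
`{x : Bx < 0}`. Since `B` and `C` give the same cone, `C B⁻¹` and its inverse `B C⁻¹` both map
the negative orthant into itself, so both are nonnegative; a nonnegative matrix with nonnegative
inverse is a permutation matrix with positive weights. Hence the columns of `B⁻¹` are positive
multiples of the columns of `C⁻¹`, permuted, and the projective height is scale invariant. -/

open Matrix

section OrderedField

variable {R ι : Type*} [Field R] [LinearOrder R] [IsStrictOrderedRing R] [Fintype ι]

theorem Matrix.mul_eq_zero_of_mul_apply_eq_zero {P Q : Matrix ι ι R}
    (hP : ∀ i j, 0 ≤ P i j) (hQ : ∀ i j, 0 ≤ Q i j) {i k : ι} (h : (P * Q) i k = 0) (l : ι) :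
    P i l * Q l k = 0 :=
  (Finset.sum_eq_zero_iff_of_nonneg fun j _ => mul_nonneg (hP i j) (hQ j k)).mp h l
    (Finset.mem_univ l)

variable [DecidableEq ι]

/-- Test `M` on `-eₖ - ε𝟙` for small `ε > 0`. -/
theorem Matrix.nonneg_of_mulVec_neg {M : Matrix ι ι R}
    (hM : ∀ v : ι → R, (∀ j, v j < 0) → ∀ i, (M *ᵥ v) i < 0) (i k : ι) : 0 ≤ M i k := by
  set S := ∑ j, M i j
  have neg_lt_mul_sum : ∀ ε : R, 0 < ε → -M i k < ε * S := by
    intro ε hε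
    have hv : ∀ j, (-Pi.single k 1 - fun _ => ε : ι → R) j < 0 := by
      intro j
      simp only [Pi.sub_apply, Pi.neg_apply, Pi.single_apply]
      split_ifs <;> linarith
    have := hM _ hv i
    rw [mulVec_sub, mulVec_neg, mulVec_single_one] at this
    simp only [Pi.sub_apply, Pi.neg_apply, col_apply, mulVec, dotProduct, ← Finset.sum_mul] at this
    linarith
  by_contra! hneg
  have hS : 0 < S := by linarith [neg_lt_mul_sum 1 one_pos]
  have := neg_lt_mul_sum (-M i k / S) (div_pos (neg_pos.mpr hneg) hS)
  rw [div_mul_cancel₀ _ hS.ne'] at this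
  exact lt_irrefl _ this

theorem Matrix.exists_perm_of_nonneg_of_inv_nonneg {P Q : Matrix ι ι R} (hP : ∀ i j, 0 ≤ P i j)
    (hQ : ∀ i j, 0 ≤ Q i j) (hPQ : P * Q = 1) (hQP : Q * P = 1) :
    ∃ σ : Equiv.Perm ι, ∀ k, 0 < P (σ k) k ∧ ∀ j, j ≠ σ k → P j k = 0 := by
  have off_diag {A B : Matrix ι ι R} (hA : ∀ i j, 0 ≤ A i j) (hB : ∀ i j, 0 ≤ B i j)
      (hAB : A * B = 1) {i k : ι} (hik : i ≠ k) (l : ι) : A i l = 0 ∨ B l k = 0 :=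
    mul_eq_zero.mp <| mul_eq_zero_of_mul_apply_eq_zero hA hB (by simp [hAB, one_apply_ne hik]) l
  have col_pos {A B : Matrix ι ι R} (hA : ∀ i j, 0 ≤ A i j) (hBA : B * A = 1) (k : ι) :
      ∃ l, 0 < A l k := by
    by_contra! h
    have : (B * A) k k = 0 := Finset.sum_eq_zero fun l _ => by
      simp only [le_antisymm (h l) (hA l k), mul_zero]
    simp [hBA] at this
  have hQ_zero {k l} (hl : 0 < P l k) {i} (hik : i ≠ k) : Q i l = 0 :=
    (off_diag hQ hP hQP hik l).resolve_right hl.ne'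
  have hQ_pos {k l} (hl : 0 < P l k) : 0 < Q k l := by
    obtain ⟨i, hi⟩ := col_pos hQ hPQ l
    rcases eq_or_ne i k with rfl | hik
    · exact hi
    · exact absurd (hQ_zero hl hik) hi.ne'
  choose σ hσ using col_pos hP hQP
  have hinj : Function.Injective σ := fun k k' hkk' => by
    by_contra hne
    exact (hQ_pos (hσ k)).ne' (hkk' ▸ hQ_zero (hσ k') hne)
  refine ⟨Equiv.ofBijective σ hinj.bijective_of_finite, fun k => ⟨hσ k, fun j hj => ?_⟩⟩
  refine le_antisymm (not_lt.mp fun hj_pos => ?_) (hP j k)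
  rcases off_diag hP hQ hPQ hj k with h | h
  · exact h.not_gt hj_pos
  · exact h.not_gt (hQ_pos (hσ k))

end OrderedField

theorem Finset.sum_div_gcd_eq_of_mul_eq {ι : Type*} [Fintype ι] {u v : ι → ℕ} {a b : ℕ}
    (ha : 0 < a) (hb : 0 < b) (h : ∀ k, b * u k = a * v k) :
    (∑ k, u k) / univ.gcd u = (∑ k, v k) / univ.gcd v := by
  calc (∑ k, u k) / univ.gcd u = (∑ k, b * u k) / univ.gcd (fun k => b * u k) := by
        rw [← mul_sum, gcd_mul_left, normalize_eq, Nat.mul_div_mul_left _ _ hb]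
    _ = (∑ k, a * v k) / univ.gcd (fun k => a * v k) := by simp only [h]
    _ = (∑ k, v k) / univ.gcd v := by
        rw [← mul_sum, gcd_mul_left, normalize_eq, Nat.mul_div_mul_left _ _ ha]

theorem Rat.num_mul_prod_den_cast {ι : Type*} [Fintype ι] (x : ι → ℚ) (k : ι) :
    ((x k * ∏ j, ((x j).den : ℚ)).num : ℚ) = x k * ∏ j, ((x j).den : ℚ) := by
  classical
  rw [← Finset.mul_prod_erase _ _ (Finset.mem_univ k), ← mul_assoc, Rat.mul_den_eq_num]
  exact_mod_cast Rat.num_intCast _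

theorem projHeight_smul {n : ℕ} {c : ℚ} (hc : c ≠ 0) (x : Fin n → ℚ) :
    projHeight (c • x) = projHeight x := by
  set D := ∏ j, (x j).den
  set D' := ∏ j, ((c • x) j).den
  refine Finset.sum_div_gcd_eq_of_mul_eq (a := c.num.natAbs * D') (b := c.den * D)
    (by positivity) (by positivity) fun k => ?_
  have hrel : ((c.den * D : ℕ) : ℤ) * ((c • x) k * ∏ j, (((c • x) j).den : ℚ)).num =
      (c.num * D') * (x k * ∏ j, ((x j).den : ℚ)).num := by
    rw [← Int.cast_inj (α := ℚ)]
    push_cast [Rat.num_mul_prod_den_cast, D, D']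
    rw [Pi.smul_apply, smul_eq_mul]
    linear_combination (x k * ∏ j, ((x j).den : ℚ)) * (∏ j, (((c • x) j).den : ℚ)) *
      Rat.den_mul_eq_num c
  simpa only [Int.natAbs_mul, Int.natAbs_natCast] using congrArg Int.natAbs hrel

theorem exp_mem_monomialPolyhedron_iff {n : ℕ} (B : Matrix (Fin n) (Fin n) ℚ) (x : Fin n → ℚ) :
    (fun k => Complex.exp (x k)) ∈ monomialPolyhedron B ↔ ∀ j, (B *ᵥ x) j < 0 := by
  have hprod (j : Fin n) :
      ∏ k, ‖Complex.exp (x k)‖ ^ (B j k : ℝ) = Real.exp ((B *ᵥ x) j : ℚ) := by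
    simp only [mulVec, dotProduct, Rat.cast_sum, Rat.cast_mul, Real.exp_sum, Complex.norm_exp,
      Complex.ratCast_re, ← Real.exp_mul, mul_comm]
  simp only [monomialPolyhedron, Set.mem_ofPred_eq, hprod, Real.exp_lt_one_iff, Rat.cast_lt_zero,
    ne_eq, Complex.exp_ne_zero, not_false_eq_true, implies_true, true_and]

theorem nonneg_mul_inv_of_monomialPolyhedron_subset {n : ℕ} {B C : Matrix (Fin n) (Fin n) ℚ}
    (hB : IsUnit B.det) (h : monomialPolyhedron B ⊆ monomialPolyhedron C) (i k : Fin n) :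
    0 ≤ (C * B⁻¹) i k := by
  refine Matrix.nonneg_of_mulVec_neg (fun v hv => ?_) i k
  have hBx : ∀ j, (B *ᵥ (B⁻¹ *ᵥ v)) j < 0 := by
    rwa [mulVec_mulVec, mul_nonsing_inv _ hB, one_mulVec]
  rw [← mulVec_mulVec]
  exact (exp_mem_monomialPolyhedron_iff C _).mp (h ((exp_mem_monomialPolyhedron_iff B _).mpr hBx))

theorem matrixComplexity_eq_of_inv_eq_inv_mul {n : ℕ} {B C M : Matrix (Fin n) (Fin n) ℚ}
    (hBC : B⁻¹ = C⁻¹ * M) (σ : Equiv.Perm (Fin n))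
    (hM : ∀ k, M (σ k) k ≠ 0 ∧ ∀ j, j ≠ σ k → M j k = 0) :
    matrixComplexity B = matrixComplexity C := by
  have hcol (k : Fin n) : (fun j => B⁻¹ j k) = M (σ k) k • fun j => C⁻¹ j (σ k) := by
    ext j
    rw [hBC, mul_apply, Finset.sum_eq_single (σ k) (fun l _ hl => by rw [(hM k).2 l hl, mul_zero])
      (by simp), Pi.smul_apply, smul_eq_mul, mul_comm]
  simp only [matrixComplexity, hcol, projHeight_smul (hM _).1, Finset.sup_univ_eq_ciSup]
  exact σ.iSup_comp (g := fun k => projHeight fun j => C⁻¹ j k)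

theorem complexity_well_defined_general {n : ℕ}
    (B C : Matrix (Fin n) (Fin n) ℚ) (hB : B.det ≠ 0) (hC : C.det ≠ 0)
    (hBC : monomialPolyhedron B = monomialPolyhedron C) :
    matrixComplexity B = matrixComplexity C := by
  have hBu : IsUnit B.det := isUnit_iff_ne_zero.mpr hB
  have hCu : IsUnit C.det := isUnit_iff_ne_zero.mpr hC
  obtain ⟨σ, hσ⟩ := Matrix.exists_perm_of_nonneg_of_inv_nonneg
    (nonneg_mul_inv_of_monomialPolyhedron_subset hBu hBC.le)
    (nonneg_mul_inv_of_monomialPolyhedron_subset hCu hBC.ge)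
    (by rw [Matrix.mul_assoc, Matrix.nonsing_inv_mul_cancel_left B C⁻¹ hBu, mul_nonsing_inv _ hCu])
    (by rw [Matrix.mul_assoc, Matrix.nonsing_inv_mul_cancel_left C B⁻¹ hCu, mul_nonsing_inv _ hBu])
  refine matrixComplexity_eq_of_inv_eq_inv_mul ?_ σ fun k => ⟨(hσ k).1.ne', (hσ k).2⟩
  rw [← Matrix.mul_assoc, nonsing_inv_mul _ hCu, Matrix.one_mul]

/-- If two invertible rational matrices `B`, `C` represent the same bounded
monomial polyhedron `𝒰`, then the maximum projective height of the columns of `B⁻¹` equals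
that of the columns of `C⁻¹`: the complexity `κ(𝒰)` depends only on `𝒰`. -/
theorem complexity_well_defined {n : ℕ} (hn : 2 ≤ n)
    (B C : Matrix (Fin n) (Fin n) ℚ) (hB : B.det ≠ 0) (hC : C.det ≠ 0)
    (hBC : monomialPolyhedron B = monomialPolyhedron C)
    (hne : (monomialPolyhedron B).Nonempty)
    (hbnd : Bornology.IsBounded (monomialPolyhedron B)) :
    matrixComplexity B = matrixComplexity C :=
  complexity_well_defined_general B C hB hC hBC
end
end

section
/- Let 1 ≤ p < ∞, let n ≥ 1, and let λ ∈ ℕ^n be a multi-index of nonnegative integers. Then there is a constant C > 0 such that for every holomorphic function f on the unit polydisc 𝔻^n with ∫_{𝔻^n} |f|^p dV < ∞, one has ∫_{𝔻^n} |f|^p dV ≤ C ∫_{𝔻^n} |z^λ f(z)|^p dV(z), where z^λ = ∏_{j=1}^n z_j^{λ_j}. -/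
open MeasureTheory Complex
open scoped ENNReal NNReal

noncomputable section

/-- The unit polydisc `𝔻ⁿ ⊆ ℂⁿ`. -/
def polydisc (n : ℕ) : Set (Fin n → ℂ) := {z | ∀ j, ‖z j‖ < 1}

/-!
In one variable, `|g| ≤ 2^m |w^m g|` on `1/2 ≤ |w| < 1`, so only the disc `|z| ≤ 1/2` needs
work. There the Cauchy integral formula on the circles of radius `r ∈ (3/4, 1)`, integrated in `r`,
bounds `|g(z)|` by the integral of `|g|` over the annulus `3/4 < |w| < 1`; Hölder's inequality and
the first estimate bound that in turn by the `L^p` norm of `w^m g`. On the polydisc the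
one-variable estimate is applied on the slices in one coordinate (Tonelli), once for each factor
`z_j^{λ_j}` of the monomial.
-/

open Metric Set Real

theorem lintegral_rpow_le_measure_univ_rpow_mul {α : Type*} [MeasurableSpace α] {μ : Measure α}
    {p : ℝ} (hp : 1 ≤ p) {f : α → ℝ≥0∞} (hf : AEMeasurable f μ) :
    (∫⁻ x, f x ∂μ) ^ p ≤ μ univ ^ (p - 1) * ∫⁻ x, f x ^ p ∂μ := by
  have hp0 : 0 < p := zero_lt_one.trans_le hp
  have h := eLpNorm_le_eLpNorm_mul_rpow_measure_univ (p := 1) (q := ENNReal.ofReal p)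
    (by simpa using hp) hf.aestronglyMeasurable
  rw [eLpNorm_one_eq_lintegral_enorm, eLpNorm_eq_lintegral_rpow_enorm_toReal (by simpa using hp0)
    ENNReal.ofReal_ne_top, ENNReal.toReal_ofReal hp0.le, ENNReal.toReal_one] at h
  have := ENNReal.rpow_le_rpow h hp0.le
  rw [ENNReal.mul_rpow_of_nonneg _ _ hp0.le, ← ENNReal.rpow_mul, ← ENNReal.rpow_mul,
    one_div_mul_cancel hp0.ne', ENNReal.rpow_one, div_one, sub_mul, one_mul,
    one_div_mul_cancel hp0.ne', mul_comm] at this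
  simpa using this

theorem ContinuousOn.measurable_indicator {α β : Type*} [TopologicalSpace α] [MeasurableSpace α]
    [OpensMeasurableSpace α] [TopologicalSpace β] [MeasurableSpace β] [BorelSpace β] [Zero β]
    {f : α → β} {s : Set α} (hf : ContinuousOn f s) (hs : MeasurableSet s) :
    Measurable (s.indicator f) := by
  classical
  exact hf.measurable_piecewise continuousOn_const hs

theorem lintegral_pi_le_mul_of_forall_lintegral_update_le {ι : Type*} [Fintype ι] [DecidableEq ι]
    {X : ι → Type*} [∀ i, MeasurableSpace (X i)] {μ : ∀ i, Measure (X i)}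
    [∀ i, SigmaFinite (μ i)] {f g : (∀ i, X i) → ℝ≥0∞} (hf : Measurable f) (hg : Measurable g)
    (j : ι) {C : ℝ≥0∞} (hC : C ≠ ⊤)
    (h : ∀ x, ∫⁻ w, f (Function.update x j w) ∂μ j ≤ C * ∫⁻ w, g (Function.update x j w) ∂μ j) :
    ∫⁻ x, f x ∂Measure.pi μ ≤ C * ∫⁻ x, g x ∂Measure.pi μ := by
  rcases isEmpty_or_nonempty (∀ i, X i) with hX | ⟨⟨x₀⟩⟩
  · simp [lintegral_of_isEmpty]
  rw [lintegral_eq_lmarginal_univ x₀, lintegral_eq_lmarginal_univ x₀,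
    lmarginal_erase' f hf (Finset.mem_univ j), lmarginal_erase' g hg (Finset.mem_univ j)]
  calc (∫⋯∫⁻_Finset.univ.erase j, (fun x => ∫⁻ w, f (Function.update x j w) ∂μ j) ∂μ) x₀
      ≤ (∫⋯∫⁻_Finset.univ.erase j, (fun x => C * ∫⁻ w, g (Function.update x j w) ∂μ j) ∂μ) x₀ :=
        lmarginal_mono h x₀
    _ = C * (∫⋯∫⁻_Finset.univ.erase j, (fun x => ∫⁻ w, g (Function.update x j w) ∂μ j) ∂μ) x₀ :=
        lintegral_const_mul' C _ hC

theorem enorm_circleAverage_le {E : Type*} [NormedAddCommGroup E] [NormedSpace ℝ E]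
    (F : ℂ → E) (r : ℝ) :
    ‖circleAverage F 0 r‖ₑ ≤
      ENNReal.ofReal (2 * π)⁻¹ * ∫⁻ θ in Ioo (-π) π, ‖F (Complex.polarCoord.symm (r, θ))‖ₑ := by
  have hshift : ∫ θ in 0..2 * π, F (circleMap 0 r θ) = ∫ θ in -π..π, F (circleMap 0 r θ) := by
    simpa [two_mul] using ((periodic_circleMap 0 r).comp F).intervalIntegral_add_eq 0 (-π)
  rw [circleAverage_def, hshift, intervalIntegral.integral_of_le (by linarith [pi_pos]),
    enorm_smul, Real.enorm_of_nonneg (by positivity), setLIntegral_congr Ioo_ae_eq_Ioc]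
  gcongr
  refine (enorm_integral_le_lintegral_enorm _).trans_eq (lintegral_congr fun θ => ?_)
  simp [circleMap, Complex.exp_mul_I]

theorem norm_div_sub_le_three {w z : ℂ} (hw : 3 / 4 ≤ ‖w‖) (hz : ‖z‖ ≤ 1 / 2) :
    ‖w / (w - z)‖ ≤ 3 := by
  have hwz : ‖w‖ - 1 / 2 ≤ ‖w - z‖ := by linarith [norm_sub_norm_le w z]
  rw [norm_div, div_le_iff₀ (by linarith)]
  linarith

theorem enorm_le_lintegral_circle {g : ℂ → ℂ} (hg : DifferentiableOn ℂ g (ball 0 1)) {z : ℂ}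
    (hz : ‖z‖ ≤ 1 / 2) {r : ℝ} (hr : r ∈ Ioo (3 / 4 : ℝ) 1) :
    ‖g z‖ₑ ≤ ENNReal.ofReal (3 / (2 * π)) *
      ∫⁻ θ in Ioo (-π) π, ‖g (Complex.polarCoord.symm (r, θ))‖ₑ := by
  have hr0 : 0 < r := by linarith [hr.1]
  have hd : DiffContOnCl ℂ g (ball 0 |r|) := by
    rw [abs_of_pos hr0]
    exact hg.diffContOnCl_ball (closedBall_subset_ball hr.2)
  have hz' : z ∈ ball 0 |r| := by
    simpa [abs_of_pos hr0] using hz.trans_lt (by linarith [hr.1])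
  rw [← hd.circleAverage_smul_div hz']
  refine (enorm_circleAverage_le _ r).trans ?_
  calc ENNReal.ofReal (2 * π)⁻¹ * ∫⁻ θ in Ioo (-π) π,
        ‖((Complex.polarCoord.symm (r, θ) - 0) / (Complex.polarCoord.symm (r, θ) - z)) •
          g (Complex.polarCoord.symm (r, θ))‖ₑ
      ≤ ENNReal.ofReal (2 * π)⁻¹ * ∫⁻ θ in Ioo (-π) π,
          ENNReal.ofReal 3 * ‖g (Complex.polarCoord.symm (r, θ))‖ₑ := by
        gcongr with θ
        rw [sub_zero, enorm_smul, ← ofReal_norm]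
        gcongr
        apply norm_div_sub_le_three _ hz
        simp [abs_of_pos hr0, hr.1.le]
    _ = _ := by
        rw [lintegral_const_mul' _ _ ENNReal.ofReal_ne_top, ← mul_assoc,
          ← ENNReal.ofReal_mul (by positivity)]
        congr 2
        ring

def outerAnnulus : Set ℂ := norm ⁻¹' Ioo (3 / 4) 1

theorem isOpen_outerAnnulus : IsOpen outerAnnulus := isOpen_Ioo.preimage continuous_norm

theorem outerAnnulus_subset_ball : outerAnnulus ⊆ ball 0 1 := fun _ hw => mem_ball_zero_iff.2 hw.2

theorem polarCoord_symm_mem_outerAnnulus {q : ℝ × ℝ} (hq : q.1 ∈ Ioo (3 / 4 : ℝ) 1) :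
    Complex.polarCoord.symm q ∈ outerAnnulus := by
  simpa [outerAnnulus, abs_of_pos (show (0 : ℝ) < q.1 by linarith [hq.1])] using hq

theorem lintegral_outerAnnulus_eq {F : ℂ → ℝ≥0∞} (hF : ContinuousOn F outerAnnulus) :
    ∫⁻ w in outerAnnulus, F w = ∫⁻ r in Ioo (3 / 4) 1,
      ENNReal.ofReal r * ∫⁻ θ in Ioo (-π) π, F (Complex.polarCoord.symm (r, θ)) := by
  set S : Set (ℝ × ℝ) := Ioo (3 / 4) 1 ×ˢ Ioo (-π) π
  have hS : S ⊆ Complex.polarCoord.target := by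
    rw [Complex.polarCoord_target]
    exact prod_mono (fun r hr => lt_trans (by norm_num) hr.1) subset_rfl
  have hmem : ∀ q ∈ Complex.polarCoord.target,
      Complex.polarCoord.symm q ∈ outerAnnulus ↔ q ∈ S := by
    rintro ⟨r, θ⟩ hq
    rw [Complex.polarCoord_target] at hq
    simp [S, outerAnnulus, abs_of_pos hq.1.out, hq.2]
  have hSm : MeasurableSet S := measurableSet_Ioo.prod measurableSet_Ioo
  have hmeas : AEMeasurable (fun q : ℝ × ℝ => ENNReal.ofReal q.1 * F (Complex.polarCoord.symm q))
      ((volume.prod volume).restrict S) :=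
    measurable_fst.ennreal_ofReal.aemeasurable.mul <| ContinuousOn.aemeasurable
      (hF.comp (Complex.polarCoord.continuousOn_symm.mono hS)
        fun q hq => polarCoord_symm_mem_outerAnnulus hq.1) hSm
  rw [← lintegral_indicator isOpen_outerAnnulus.measurableSet,
    ← Complex.lintegral_comp_polarCoord_symm]
  calc ∫⁻ q in Complex.polarCoord.target,
        ENNReal.ofReal q.1 • outerAnnulus.indicator F (Complex.polarCoord.symm q)
      = ∫⁻ q in Complex.polarCoord.target,
          S.indicator (fun q => ENNReal.ofReal q.1 * F (Complex.polarCoord.symm q)) q := by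
        refine setLIntegral_congr_fun Complex.polarCoord.open_target.measurableSet fun q hq => ?_
        by_cases h : q ∈ S
        · rw [indicator_of_mem h, indicator_of_mem ((hmem q hq).2 h), smul_eq_mul]
        · rw [indicator_of_notMem h, indicator_of_notMem (mt (hmem q hq).1 h), smul_zero]
    _ = ∫⁻ q in S, ENNReal.ofReal q.1 * F (Complex.polarCoord.symm q) := by
        rw [lintegral_indicator hSm, Measure.restrict_restrict hSm, inter_eq_left.2 hS]
    _ = _ := by
        rw [Measure.volume_eq_prod, setLIntegral_prod _ hmeas]
        exact lintegral_congr fun r => lintegral_const_mul' _ _ ENNReal.ofReal_ne_top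

theorem enorm_le_lintegral_outerAnnulus {g : ℂ → ℂ} (hg : DifferentiableOn ℂ g (ball 0 1))
    {z : ℂ} (hz : ‖z‖ ≤ 1 / 2) :
    ‖g z‖ₑ ≤ ENNReal.ofReal (8 / π) * ∫⁻ w in outerAnnulus, ‖g w‖ₑ := by
  rw [lintegral_outerAnnulus_eq (hg.continuousOn.mono outerAnnulus_subset_ball).enorm]
  set Ψ : ℝ → ℝ≥0∞ := fun r => ∫⁻ θ in Ioo (-π) π, ‖g (Complex.polarCoord.symm (r, θ))‖ₑ
  have key : ∫⁻ _ in Ioo (3 / 4 : ℝ) 1, ENNReal.ofReal (3 / 4) * ‖g z‖ₑ ≤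
      ∫⁻ r in Ioo (3 / 4 : ℝ) 1, ENNReal.ofReal (3 / (2 * π)) * (ENNReal.ofReal r * Ψ r) :=
    setLIntegral_mono' measurableSet_Ioo fun r hr => by
      rw [mul_left_comm]
      exact mul_le_mul' (ENNReal.ofReal_le_ofReal hr.1.le) (enorm_le_lintegral_circle hg hz hr)
  rw [setLIntegral_const, Real.volume_Ioo, lintegral_const_mul' _ _ ENNReal.ofReal_ne_top,
    mul_right_comm, ← ENNReal.ofReal_mul (by norm_num)] at key
  have h316 : ENNReal.ofReal (3 / (2 * π)) = ENNReal.ofReal (3 / 16) * ENNReal.ofReal (8 / π) := by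
    rw [← ENNReal.ofReal_mul (by norm_num)]
    congr 1
    field_simp
    ring
  rw [show (3 / 4 : ℝ) * (1 - 3 / 4) = 3 / 16 by norm_num, h316, mul_assoc] at key
  exact (ENNReal.mul_le_mul_iff_right (by norm_num) ENNReal.ofReal_ne_top).1 key

theorem enorm_rpow_le_two_pow_mul {p : ℝ} (hp : 0 ≤ p) (m : ℕ) {w a : ℂ} (hw : 1 / 2 ≤ ‖w‖) :
    ‖a‖ₑ ^ p ≤ (2 ^ m : ℝ≥0∞) ^ p * ‖w ^ m * a‖ₑ ^ p := by
  rw [← ENNReal.mul_rpow_of_nonneg _ _ hp]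
  gcongr
  have h : ‖a‖ ≤ ‖(2 * w) ^ m * a‖ := by
    rw [norm_mul, norm_pow, norm_mul, Complex.norm_two]
    exact le_mul_of_one_le_left (norm_nonneg a) (one_le_pow₀ (by linarith))
  calc ‖a‖ₑ ≤ ‖(2 * w) ^ m * a‖ₑ := enorm_le_iff_norm_le.2 h
    _ = 2 ^ m * ‖w ^ m * a‖ₑ := by
      rw [mul_pow, mul_assoc, enorm_mul, enorm_pow, enorm_eq_nnnorm (2 : ℂ)]
      simp

theorem setLIntegral_enorm_rpow_le_of_half_le_norm {p : ℝ} (hp : 0 ≤ p) (m : ℕ) (g : ℂ → ℂ)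
    {s : Set ℂ} (hsm : MeasurableSet s) (hs : s ⊆ ball 0 1) (hs' : ∀ w ∈ s, 1 / 2 ≤ ‖w‖) :
    ∫⁻ w in s, ‖g w‖ₑ ^ p ≤ (2 ^ m : ℝ≥0∞) ^ p * ∫⁻ w in ball 0 1, ‖w ^ m * g w‖ₑ ^ p := by
  calc ∫⁻ w in s, ‖g w‖ₑ ^ p ≤ ∫⁻ w in s, (2 ^ m : ℝ≥0∞) ^ p * ‖w ^ m * g w‖ₑ ^ p :=
        setLIntegral_mono' hsm fun w hw => enorm_rpow_le_two_pow_mul hp m (hs' w hw)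
    _ ≤ _ := by
      rw [lintegral_const_mul' _ _
        (ENNReal.rpow_ne_top_of_nonneg hp (ENNReal.pow_ne_top ENNReal.ofNat_ne_top))]
      gcongr

theorem exists_lintegral_ball_rpow_le {p : ℝ} (hp : 1 ≤ p) (m : ℕ) :
    ∃ C : ℝ≥0∞, C ≠ ⊤ ∧ ∀ g : ℂ → ℂ, DifferentiableOn ℂ g (ball 0 1) →
      ∫⁻ w in ball 0 1, ‖g w‖ₑ ^ p ≤ C * ∫⁻ w in ball 0 1, ‖w ^ m * g w‖ₑ ^ p := by
  have hp0 : 0 ≤ p := zero_le_one.trans hp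
  set c : ℝ≥0∞ := (2 ^ m : ℝ≥0∞) ^ p
  set K : ℝ≥0∞ := volume (closedBall (0 : ℂ) (1 / 2)) * ENNReal.ofReal (8 / π) ^ p *
    volume outerAnnulus ^ (p - 1)
  have hc : c ≠ ⊤ := ENNReal.rpow_ne_top_of_nonneg hp0 (ENNReal.pow_ne_top ENNReal.ofNat_ne_top)
  have hK : K ≠ ⊤ := by
    refine ENNReal.mul_ne_top (ENNReal.mul_ne_top measure_closedBall_lt_top.ne
      (ENNReal.rpow_ne_top_of_nonneg hp0 ENNReal.ofReal_ne_top))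
      (ENNReal.rpow_ne_top_of_nonneg (by linarith) ?_)
    exact ((measure_mono outerAnnulus_subset_ball).trans_lt measure_ball_lt_top).ne
  refine ⟨(K + 1) * c, ENNReal.mul_ne_top (ENNReal.add_ne_top.2 ⟨hK, ENNReal.one_ne_top⟩) hc,
    fun g hg => ?_⟩
  set J := ∫⁻ w in ball 0 1, ‖w ^ m * g w‖ₑ ^ p
  have hannulus : ∫⁻ w in outerAnnulus, ‖g w‖ₑ ^ p ≤ c * J :=
    setLIntegral_enorm_rpow_le_of_half_le_norm hp0 m g isOpen_outerAnnulus.measurableSet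
      outerAnnulus_subset_ball fun w hw => by linarith [show (3 / 4 : ℝ) < ‖w‖ from hw.1]
  have hinner : ∫⁻ w in closedBall 0 (1 / 2), ‖g w‖ₑ ^ p ≤ K * (c * J) := by
    set I := ∫⁻ w in outerAnnulus, ‖g w‖ₑ
    have hI : I ^ p ≤ volume outerAnnulus ^ (p - 1) * ∫⁻ w in outerAnnulus, ‖g w‖ₑ ^ p := by
      simpa using lintegral_rpow_le_measure_univ_rpow_mul hp
        ((hg.continuousOn.mono outerAnnulus_subset_ball).aemeasurable
          isOpen_outerAnnulus.measurableSet).enorm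
    calc ∫⁻ w in closedBall 0 (1 / 2), ‖g w‖ₑ ^ p
        ≤ ∫⁻ _ in closedBall (0 : ℂ) (1 / 2), (ENNReal.ofReal (8 / π) * I) ^ p :=
          setLIntegral_mono' measurableSet_closedBall fun z hz =>
            ENNReal.rpow_le_rpow (enorm_le_lintegral_outerAnnulus hg
              (mem_closedBall_zero_iff.1 hz)) hp0
      _ = volume (closedBall (0 : ℂ) (1 / 2)) * ENNReal.ofReal (8 / π) ^ p * I ^ p := by
          rw [setLIntegral_const, ENNReal.mul_rpow_of_nonneg _ _ hp0]
          ring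
      _ ≤ K * (c * J) := by
          show _ ≤ _ * _ * _ * _
          rw [mul_assoc _ (volume outerAnnulus ^ (p - 1))]
          gcongr
          exact hI.trans (by gcongr)
  calc ∫⁻ w in ball 0 1, ‖g w‖ₑ ^ p
      ≤ ∫⁻ w in closedBall 0 (1 / 2) ∪ ball 0 1 \ closedBall 0 (1 / 2), ‖g w‖ₑ ^ p :=
        lintegral_mono_set (by rw [union_sdiff_self]; exact subset_union_right)
    _ ≤ (∫⁻ w in closedBall 0 (1 / 2), ‖g w‖ₑ ^ p) +
          ∫⁻ w in ball 0 1 \ closedBall 0 (1 / 2), ‖g w‖ₑ ^ p := lintegral_union_le _ _ _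
    _ ≤ K * (c * J) + c * J := by
        gcongr
        exact setLIntegral_enorm_rpow_le_of_half_le_norm hp0 m g
          (measurableSet_ball.diff measurableSet_closedBall) sdiff_subset
          fun w hw => (not_le.1 (mt mem_closedBall_zero_iff.2 hw.2)).le
    _ = (K + 1) * c * J := by ring

theorem isOpen_polydisc (n : ℕ) : IsOpen (polydisc n) := by
  simpa only [polydisc, ofPred_forall] using
    isOpen_iInter_of_finite fun j => isOpen_lt (continuous_apply j).norm continuous_const

theorem update_mem_polydisc_iff {n : ℕ} {x : Fin n → ℂ} {j : Fin n} {w : ℂ} :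
    Function.update x j w ∈ polydisc n ↔ ‖w‖ < 1 ∧ ∀ i ≠ j, ‖x i‖ < 1 := by
  constructor
  · intro h
    exact ⟨by simpa using h j, fun i hi => by simpa [hi] using h i⟩
  · rintro ⟨hw, hx⟩ i
    rcases eq_or_ne i j with rfl | hi
    · simpa using hw
    · simpa [hi] using hx i hi

theorem exists_lintegral_polydisc_rpow_le_coord_pow {p : ℝ} (hp : 1 ≤ p) {n : ℕ} (j : Fin n)
    (m : ℕ) : ∃ C : ℝ≥0∞, C ≠ ⊤ ∧ ∀ g : (Fin n → ℂ) → ℂ, DifferentiableOn ℂ g (polydisc n) →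
      ∫⁻ z in polydisc n, ‖g z‖ₑ ^ p ≤ C * ∫⁻ z in polydisc n, ‖z j ^ m * g z‖ₑ ^ p := by
  obtain ⟨C, hC, hdisc⟩ := exists_lintegral_ball_rpow_le hp m
  refine ⟨C, hC, fun g hg => ?_⟩
  have hmeas : ∀ φ : (Fin n → ℂ) → ℂ, DifferentiableOn ℂ φ (polydisc n) →
      Measurable ((polydisc n).indicator fun z => ‖φ z‖ₑ ^ p) := fun φ hφ =>
    (ENNReal.continuous_rpow_const.comp_continuousOn hφ.continuousOn.enorm).measurable_indicator
      (isOpen_polydisc n).measurableSet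
  have hslice : ∀ (φ : (Fin n → ℂ) → ℂ) (x : Fin n → ℂ), (∀ i ≠ j, ‖x i‖ < 1) →
      ∫⁻ w, (polydisc n).indicator (fun z => ‖φ z‖ₑ ^ p) (Function.update x j w) =
        ∫⁻ w in ball 0 1, ‖φ (Function.update x j w)‖ₑ ^ p := fun φ x hx => by
    rw [← lintegral_indicator measurableSet_ball]
    congr 1 with w
    simp only [Set.indicator, update_mem_polydisc_iff, and_iff_left hx, mem_ball_zero_iff]
  have hg' : DifferentiableOn ℂ (fun z => z j ^ m * g z) (polydisc n) := by fun_prop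
  simp only [← lintegral_indicator (isOpen_polydisc n).measurableSet, volume_pi]
  refine lintegral_pi_le_mul_of_forall_lintegral_update_le (hmeas g hg) (hmeas _ hg') j hC
    fun x => ?_
  by_cases hx : ∀ i ≠ j, ‖x i‖ < 1
  · have hupdate : Differentiable ℂ (Function.update x j) := fun w =>
      (hasFDerivAt_update x w).differentiableAt
    rw [hslice g x hx, hslice _ x hx]
    simp only [Function.update_self]
    exact hdisc _ (hg.comp hupdate.differentiableOn
      fun w hw => update_mem_polydisc_iff.2 ⟨mem_ball_zero_iff.1 hw, hx⟩)
  · simp [update_mem_polydisc_iff, hx]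

theorem exists_lintegral_polydisc_rpow_le_monomial {p : ℝ} (hp : 1 ≤ p) {n : ℕ}
    (lam : Fin n → ℕ) (s : Finset (Fin n)) :
    ∃ C : ℝ≥0∞, C ≠ ⊤ ∧ ∀ g : (Fin n → ℂ) → ℂ, DifferentiableOn ℂ g (polydisc n) →
      ∫⁻ z in polydisc n, ‖g z‖ₑ ^ p ≤
        C * ∫⁻ z in polydisc n, ‖(∏ j ∈ s, z j ^ lam j) * g z‖ₑ ^ p := by
  classical
  induction s using Finset.induction_on with
  | empty => exact ⟨1, ENNReal.one_ne_top, fun g _ => by simp⟩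
  | insert j s hj ih =>
    obtain ⟨C, hC, hs⟩ := ih
    obtain ⟨C', hC', hcoord⟩ := exists_lintegral_polydisc_rpow_le_coord_pow hp j (lam j)
    refine ⟨C * C', ENNReal.mul_ne_top hC hC', fun g hg => ?_⟩
    calc ∫⁻ z in polydisc n, ‖g z‖ₑ ^ p
        ≤ C' * ∫⁻ z in polydisc n, ‖z j ^ lam j * g z‖ₑ ^ p := hcoord g hg
      _ ≤ C' * (C * ∫⁻ z in polydisc n,
            ‖(∏ i ∈ s, z i ^ lam i) * (z j ^ lam j * g z)‖ₑ ^ p) := by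
          gcongr
          exact hs _ (by fun_prop)
      _ = C * C' * ∫⁻ z in polydisc n, ‖(∏ i ∈ insert j s, z i ^ lam i) * g z‖ₑ ^ p := by
          rw [mul_comm C C', mul_assoc]
          congr 3 with z
          rw [Finset.prod_insert hj, mul_left_comm, ← mul_assoc]

theorem monomial_multiplier_estimate_polydisc_general (p : ℝ) (hp : 1 ≤ p) (n : ℕ)
    (lam : Fin n → ℕ) :
    ∃ C : ℝ, 0 < C ∧ ∀ f : (Fin n → ℂ) → ℂ,
      DifferentiableOn ℂ f (polydisc n) →
      (∫⁻ z in polydisc n, (‖f z‖₊ : ℝ≥0∞) ^ p) ≠ ⊤ →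
      ∫⁻ z in polydisc n, (‖f z‖₊ : ℝ≥0∞) ^ p ≤
        ENNReal.ofReal C *
          ∫⁻ z in polydisc n, (‖(∏ j, z j ^ lam j) * f z‖₊ : ℝ≥0∞) ^ p := by
  obtain ⟨K, hK, hest⟩ := exists_lintegral_polydisc_rpow_le_monomial hp lam Finset.univ
  refine ⟨K.toReal + 1, by positivity, fun f hf _ => ?_⟩
  simp only [← enorm_eq_nnnorm]
  refine (hest f hf).trans ?_
  gcongr
  exact (ENNReal.le_ofReal_iff_toReal_le hK (by positivity)).2 (by linarith)

/-- For `1 ≤ p < ∞` and a multi-index `λ ∈ ℕⁿ`, there is `C > 0` such that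
every `f ∈ A^p(𝔻ⁿ)` satisfies `∫_{𝔻ⁿ} |f|^p dV ≤ C ∫_{𝔻ⁿ} |z^λ f|^p dV`. -/
theorem monomial_multiplier_estimate_polydisc (p : ℝ) (hp : 1 ≤ p) (n : ℕ) (hn : 1 ≤ n)
    (lam : Fin n → ℕ) :
    ∃ C : ℝ, 0 < C ∧ ∀ f : (Fin n → ℂ) → ℂ,
      DifferentiableOn ℂ f (polydisc n) →
      (∫⁻ z in polydisc n, (‖f z‖₊ : ℝ≥0∞) ^ p) ≠ ⊤ →
      ∫⁻ z in polydisc n, (‖f z‖₊ : ℝ≥0∞) ^ p ≤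
        ENNReal.ofReal C *
          ∫⁻ z in polydisc n, (‖(∏ j, z j ^ lam j) * f z‖₊ : ℝ≥0∞) ^ p :=
  monomial_multiplier_estimate_polydisc_general p hp n lam
end
end
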